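/- Let L ⊂ ℝⁿ be a convex body with 0 ∈ int L and L ⊂ −rL for some r ≥ 1, and let z ∈ (1−C)L for some 0 < C ≤ 1. Then the modulus of convexity of the polar of the translated body satisfies δ_{(L_z)°}(t) ≥ δ_{L°}(C²t/(1−C+r)) / ((1−C)r + 1) for every 0 ≤ t ≤ 1. -/

import Mathlib

/-!
Write `h_K` for the support function of `K`; the gauge of `K°` is `h_K`, and
`h_{L-z}(u) = h_L(u) - ⟪u, z⟫ ≥ C h_L(u)`. A point `x` of `(L - z)°` is `α p` with `p ∈ L°` and
`α = 1 + ⟪x, z⟫ ∈ [1 / ((1 - C) r + 1), 1 / C]`. For a pair `x = α p`, `y = β q` with `β ≤ α`,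
replace `q` by `q₁ = (1 - ν) p + ν q ∈ L°`, `ν = 2β / (α + β)`: the midpoint of `p, q₁` is
`(x + y) / (α + β)`, so `1 - h_{L-z}((x + y) / 2)` is `(α + β) / 2` times `1 - h_L((p + q₁) / 2)`,
while `h_L(p - q₁) = ν h_L(p - q) ≥ C h_{L-z}(x - y)`. Ordering the pair by `⟪·, z⟫` costs the
factor `(1 - C + r) / C`, since `C h_{L-z}(u) ≤ (1 - C + r) h_{L-z}(-u)`.
-/

open Pointwise

/-- The (possibly asymmetric) modulus of convexity of a convex body `M` with `0` in its
interior, measured via the gauge function of `M`. -/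
noncomputable def modConv {n : ℕ} (M : Set (EuclideanSpace ℝ (Fin n))) (t : ℝ) : ℝ :=
  sInf {s : ℝ | ∃ x ∈ M, ∃ y ∈ M, t ≤ gauge M (x - y) ∧ s = 1 - gauge M ((2 : ℝ)⁻¹ • (x + y))}

/-- The polar body of a set in Euclidean space. -/
def polarSet {n : ℕ} (M : Set (EuclideanSpace ℝ (Fin n))) : Set (EuclideanSpace ℝ (Fin n)) :=
  {x | ∀ y ∈ M, inner ℝ x y ≤ (1 : ℝ)}

open RealInnerProductSpace

noncomputable def supportFun {E : Type*} [NormedAddCommGroup E] [InnerProductSpace ℝ E]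
    (K : Set E) (u : E) : ℝ :=
  sSup ((fun w => ⟪u, w⟫) '' K)

section SupportFunction

variable {E : Type*} [NormedAddCommGroup E] [InnerProductSpace ℝ E] {K : Set E}

theorem le_supportFun (hK : IsCompact K) {w : E} (hw : w ∈ K) (u : E) :
    ⟪u, w⟫ ≤ supportFun K u :=
  le_csSup (hK.bddAbove_image (continuous_const.inner continuous_id).continuousOn) ⟨w, hw, rfl⟩

theorem supportFun_le (hK' : K.Nonempty) {u : E} {c : ℝ} (h : ∀ w ∈ K, ⟪u, w⟫ ≤ c) :
    supportFun K u ≤ c :=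
  csSup_le (hK'.image _) (by rintro _ ⟨w, hw, rfl⟩; exact h w hw)

theorem supportFun_nonneg (hK : IsCompact K) (h0 : 0 ∈ K) (u : E) : 0 ≤ supportFun K u := by
  simpa using le_supportFun hK h0 u

theorem supportFun_smul {c : ℝ} (hc : 0 ≤ c) (u : E) :
    supportFun K (c • u) = c * supportFun K u := by
  have : (fun w => ⟪c • u, w⟫) '' K = c • (fun w => ⟪u, w⟫) '' K := by
    rw [← Set.image_smul, Set.image_image]
    simp only [real_inner_smul_left, smul_eq_mul]
  rw [supportFun, this, Real.sSup_smul_of_nonneg hc, smul_eq_mul, supportFun]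

theorem supportFun_add_le (hK : IsCompact K) (hK' : K.Nonempty) (u v : E) :
    supportFun K (u + v) ≤ supportFun K u + supportFun K v :=
  supportFun_le hK' fun w hw => by
    rw [inner_add_left]
    exact add_le_add (le_supportFun hK hw u) (le_supportFun hK hw v)

theorem supportFun_smul_sub_smul_le (hK : IsCompact K) (hK' : K.Nonempty) {p : E}
    (hp : supportFun K p ≤ 1) (q : E) {α β : ℝ} (hβ : 0 ≤ β) (hβα : β ≤ α) :
    supportFun K (α • p - β • q) ≤ β * supportFun K (p - q) + (α - β) := by
  have hsplit : α • p - β • q = β • (p - q) + (α - β) • p := by module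
  calc supportFun K (α • p - β • q)
      ≤ β * supportFun K (p - q) + (α - β) * supportFun K p := by
        rw [hsplit, ← supportFun_smul hβ, ← supportFun_smul (sub_nonneg.2 hβα)]
        exact supportFun_add_le hK hK' _ _
    _ ≤ β * supportFun K (p - q) + (α - β) := by
        nlinarith [sub_nonneg.2 hβα]

theorem supportFun_image_sub (hK : IsCompact K) (hK' : K.Nonempty) (z u : E) :
    supportFun ((· - z) '' K) u = supportFun K u - ⟪u, z⟫ := by
  apply le_antisymm
  · refine supportFun_le (hK'.image _) ?_
    rintro _ ⟨w, hw, rfl⟩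
    rw [inner_sub_right]
    linarith [le_supportFun hK hw u]
  · have hK'' : IsCompact ((· - z) '' K) := hK.image (continuous_sub_right z)
    refine sub_le_iff_le_add.2 (supportFun_le hK' fun w hw => ?_)
    have := le_supportFun hK'' ⟨w, hw, rfl⟩ u
    rw [inner_sub_right] at this
    linarith

theorem inner_le_supportFun_smul (hK : IsCompact K) {a : ℝ} {w : E} (hw : w ∈ a • K)
    (u : E) : ⟪u, w⟫ ≤ supportFun K (a • u) := by
  obtain ⟨w', hw', rfl⟩ := Set.mem_smul_set.1 hw
  rw [real_inner_smul_right, ← real_inner_smul_left]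
  exact le_supportFun hK hw' _

theorem inner_le_mul_supportFun (hK : IsCompact K) {a : ℝ} (ha : 0 ≤ a) {w : E}
    (hw : w ∈ a • K) (u : E) : ⟪u, w⟫ ≤ a * supportFun K u :=
  supportFun_smul ha u ▸ inner_le_supportFun_smul hK hw u

theorem supportFun_neg_le (hK : IsCompact K) (hK' : K.Nonempty) {r : ℝ} (hr : 0 ≤ r)
    (hKr : K ⊆ (-r) • K) (u : E) : supportFun K (-u) ≤ r * supportFun K u :=
  supportFun_le hK' fun w hw => by
    simpa [supportFun_smul hr] using inner_le_supportFun_smul hK (hKr hw) (-u)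

variable {z : E} {r C : ℝ}

theorem mul_supportFun_le_supportFun_image_sub (hK : IsCompact K) (hK' : K.Nonempty)
    (hC1 : C ≤ 1) (hz : z ∈ (1 - C) • K) (u : E) :
    C * supportFun K u ≤ supportFun ((· - z) '' K) u := by
  rw [supportFun_image_sub hK hK']
  linarith [inner_le_mul_supportFun hK (sub_nonneg.2 hC1) hz u]

theorem supportFun_image_sub_nonneg (hK : IsCompact K) (h0K : 0 ∈ K) (hC0 : 0 ≤ C)
    (hC1 : C ≤ 1) (hz : z ∈ (1 - C) • K) (u : E) : 0 ≤ supportFun ((· - z) '' K) u :=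
  (mul_nonneg hC0 (supportFun_nonneg hK h0K u)).trans
    (mul_supportFun_le_supportFun_image_sub hK ⟨0, h0K⟩ hC1 hz u)

theorem mul_supportFun_image_sub_le_neg (hK : IsCompact K) (hK' : K.Nonempty) (hr : 0 ≤ r)
    (hKr : K ⊆ (-r) • K) (hC0 : 0 ≤ C) (hC1 : C ≤ 1) (hz : z ∈ (1 - C) • K) (u : E) :
    C * supportFun ((· - z) '' K) u ≤ (1 - C + r) * supportFun ((· - z) '' K) (-u) := by
  have hneg := supportFun_neg_le hK hK' hr hKr (-u)
  have hz' := inner_le_mul_supportFun hK (sub_nonneg.2 hC1) hz (-u)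
  rw [neg_neg] at hneg
  rw [supportFun_image_sub hK hK', supportFun_image_sub hK hK', inner_neg_left] at *
  nlinarith [mul_le_mul_of_nonneg_left hneg hC0]

end SupportFunction

theorem gauge_setOf_le_one {E : Type*} [AddCommGroup E] [Module ℝ E] {f : E → ℝ}
    (hf0 : ∀ u, 0 ≤ f u) (hf : ∀ c : ℝ, 0 < c → ∀ u, f (c • u) = c * f u) (u : E) :
    gauge {v | f v ≤ 1} u = f u := by
  have hset : {r ∈ Set.Ioi (0 : ℝ) | r⁻¹ • u ∈ {v | f v ≤ 1}} = Set.Ioi 0 ∩ Set.Ici (f u) := by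
    ext r
    simp only [Set.mem_ofPred_eq, Set.mem_inter_iff, Set.mem_Ioi, Set.mem_Ici, and_congr_right_iff]
    intro hr
    rw [hf _ (inv_pos.2 hr), inv_mul_le_iff₀ hr, mul_one]
  rw [gauge_def', hset]
  rcases (hf0 u).eq_or_lt with h | h
  · rw [← h, Set.inter_eq_left.2 Set.Ioi_subset_Ici_self, csInf_Ioi]
  · rw [Set.inter_eq_right.2 (Set.Ici_subset_Ioi.2 h), csInf_Ici]

def modConvSet {n : ℕ} (M : Set (EuclideanSpace ℝ (Fin n))) (t : ℝ) : Set ℝ :=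
  {s : ℝ | ∃ x ∈ M, ∃ y ∈ M, t ≤ gauge M (x - y) ∧ s = 1 - gauge M ((2 : ℝ)⁻¹ • (x + y))}

section ModulusOfConvexity

variable {n : ℕ} {M : Set (EuclideanSpace ℝ (Fin n))} {t : ℝ}

theorem modConv_eq_sInf (M : Set (EuclideanSpace ℝ (Fin n))) (t : ℝ) :
    modConv M t = sInf (modConvSet M t) :=
  rfl

theorem modConvSet_nonempty_of_mem {x : EuclideanSpace ℝ (Fin n)} (hx : x ∈ M) (h0 : 0 ∈ M)
    (ht : t ≤ gauge M x) : (modConvSet M t).Nonempty :=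
  ⟨_, x, hx, 0, h0, by rwa [sub_zero], rfl⟩

theorem nonneg_of_mem_modConvSet (hM : Convex ℝ M) {s : ℝ} (hs : s ∈ modConvSet M t) :
    0 ≤ s := by
  obtain ⟨x, hx, y, hy, -, rfl⟩ := hs
  have hmid : (2 : ℝ)⁻¹ • (x + y) ∈ M := by
    rw [smul_add]
    exact hM hx hy (by norm_num) (by norm_num) (by norm_num)
  exact sub_nonneg.2 (gauge_le_one_of_mem hmid)

theorem modConv_nonneg (hM : Convex ℝ M) (t : ℝ) : 0 ≤ modConv M t :=
  Real.sInf_nonneg fun _ => nonneg_of_mem_modConvSet hM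

theorem modConv_le (hM : Convex ℝ M) {x y : EuclideanSpace ℝ (Fin n)} (hx : x ∈ M) (hy : y ∈ M)
    (ht : t ≤ gauge M (x - y)) : modConv M t ≤ 1 - gauge M ((2 : ℝ)⁻¹ • (x + y)) :=
  csInf_le ⟨0, fun _ => nonneg_of_mem_modConvSet hM⟩ ⟨x, hx, y, hy, ht, rfl⟩

end ModulusOfConvexity

section Polar

variable {n : ℕ} {K : Set (EuclideanSpace ℝ (Fin n))}

theorem zero_mem_polarSet (K : Set (EuclideanSpace ℝ (Fin n))) : 0 ∈ polarSet K :=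
  fun _ _ => by simp

theorem convex_polarSet (K : Set (EuclideanSpace ℝ (Fin n))) : Convex ℝ (polarSet K) := by
  intro x hx y hy a b ha hb hab w hw
  simp only [inner_add_left, real_inner_smul_left]
  nlinarith [mul_le_mul_of_nonneg_left (hx w hw) ha, mul_le_mul_of_nonneg_left (hy w hw) hb]

theorem polarSet_eq_setOf_supportFun_le (hK : IsCompact K) (hK' : K.Nonempty) :
    polarSet K = {u | supportFun K u ≤ 1} :=
  Set.ext fun u =>
    ⟨fun hu => supportFun_le hK' hu, fun hu _ hw => (le_supportFun hK hw u).trans hu⟩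

theorem gauge_polarSet (hK : IsCompact K) (hK' : K.Nonempty)
    (hK0 : ∀ u, 0 ≤ supportFun K u) (u : EuclideanSpace ℝ (Fin n)) :
    gauge (polarSet K) u = supportFun K u := by
  rw [polarSet_eq_setOf_supportFun_le hK hK']
  exact gauge_setOf_le_one hK0 (fun c hc => supportFun_smul hc.le) u

theorem mul_modConv_polarSet_le (hK : IsCompact K) (hK' : K.Nonempty)
    (hK0 : ∀ u, 0 ≤ supportFun K u) {p q : EuclideanSpace ℝ (Fin n)}
    (hp : p ∈ polarSet K) (hq : q ∈ polarSet K) {α β s : ℝ} (hβ : 0 < β) (hβα : β ≤ α)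
    (hs : s ≤ 2 * β / (α + β) * supportFun K (p - q)) :
    (α + β) / 2 * modConv (polarSet K) s ≤
      (α + β) / 2 - supportFun K ((2 : ℝ)⁻¹ • (α • p + β • q)) := by
  set ν := 2 * β / (α + β)
  have hσ : 0 < (α + β) / 2 := by linarith
  have hν : 0 ≤ ν := div_nonneg (by linarith) (by linarith)
  have hν1 : ν ≤ 1 := (div_le_one (by linarith)).2 (by linarith)
  have hq₁ : (1 - ν) • p + ν • q ∈ polarSet K :=
    convex_polarSet K hp hq (sub_nonneg.2 hν1) hν (sub_add_cancel 1 ν)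
  have hdiff : p - ((1 - ν) • p + ν • q) = ν • (p - q) := by module
  have hmid : (2 : ℝ)⁻¹ • (α • p + β • q) =
      ((α + β) / 2) • ((2 : ℝ)⁻¹ • (p + ((1 - ν) • p + ν • q))) := by
    have : α + β ≠ 0 := by linarith
    simp only [ν]
    match_scalars <;> field_simp
    ring
  have hδ := modConv_le (t := s) (convex_polarSet K) hp hq₁
    (by rwa [gauge_polarSet hK hK' hK0, hdiff, supportFun_smul hν])
  rw [gauge_polarSet hK hK' hK0] at hδ
  rw [hmid, supportFun_smul hσ.le]
  nlinarith [mul_le_mul_of_nonneg_left hδ hσ.le]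

end Polar

section Translate

variable {n : ℕ} {L : Set (EuclideanSpace ℝ (Fin n))} {z : EuclideanSpace ℝ (Fin n)} {r C : ℝ}

theorem inner_le_one_add_inner {x w : EuclideanSpace ℝ (Fin n)}
    (hx : x ∈ polarSet ((· - z) '' L)) (hw : w ∈ L) : ⟪x, w⟫ ≤ 1 + ⟪x, z⟫ := by
  have := hx _ ⟨w, hw, rfl⟩
  rw [inner_sub_right] at this
  linarith

theorem supportFun_le_one_add_inner (hL' : L.Nonempty) {x : EuclideanSpace ℝ (Fin n)}
    (hx : x ∈ polarSet ((· - z) '' L)) : supportFun L x ≤ 1 + ⟪x, z⟫ :=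
  supportFun_le hL' fun _ hw => inner_le_one_add_inner hx hw

theorem mul_one_add_inner_le_one (hL : IsCompact L) (hL' : L.Nonempty) (hC1 : C ≤ 1)
    (hz : z ∈ (1 - C) • L) {x : EuclideanSpace ℝ (Fin n)} (hx : x ∈ polarSet ((· - z) '' L)) :
    C * (1 + ⟪x, z⟫) ≤ 1 := by
  have hxz := inner_le_mul_supportFun hL (sub_nonneg.2 hC1) hz x
  nlinarith [supportFun_le_one_add_inner hL' hx, mul_le_mul_of_nonneg_left
    (supportFun_le_one_add_inner hL' hx) (sub_nonneg.2 hC1)]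

theorem one_le_mul_one_add_inner (hL : IsCompact L) (hL' : L.Nonempty) (hr : 0 ≤ r)
    (hLr : L ⊆ (-r) • L) (hC1 : C ≤ 1) (hz : z ∈ (1 - C) • L) {x : EuclideanSpace ℝ (Fin n)}
    (hx : x ∈ polarSet ((· - z) '' L)) : 1 ≤ ((1 - C) * r + 1) * (1 + ⟪x, z⟫) := by
  have hxz := inner_le_mul_supportFun hL (sub_nonneg.2 hC1) hz (-x)
  have hneg := supportFun_neg_le hL hL' hr hLr x
  have hx' := supportFun_le_one_add_inner hL' hx
  rw [inner_neg_left] at hxz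
  nlinarith [mul_le_mul_of_nonneg_left hneg (sub_nonneg.2 hC1),
    mul_le_mul_of_nonneg_left hx' (mul_nonneg (sub_nonneg.2 hC1) hr)]

theorem inv_smul_mem_polarSet {x : EuclideanSpace ℝ (Fin n)}
    (hx : x ∈ polarSet ((· - z) '' L)) (hxz : 0 < 1 + ⟪x, z⟫) :
    (1 + ⟪x, z⟫)⁻¹ • x ∈ polarSet L := fun w hw => by
  rw [real_inner_smul_left, inv_mul_le_one₀ hxz]
  exact inner_le_one_add_inner hx hw

theorem modConv_polarSet_div_le_of_inner_le (hL : IsCompact L) (h0L : 0 ∈ L) (hr : 0 ≤ r)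
    (hLr : L ⊆ (-r) • L) (hC0 : 0 < C) (hC1 : C ≤ 1) (hz : z ∈ (1 - C) • L)
    {x y : EuclideanSpace ℝ (Fin n)} (hx : x ∈ polarSet ((· - z) '' L))
    (hy : y ∈ polarSet ((· - z) '' L)) (hyx : ⟪y, z⟫ ≤ ⟪x, z⟫) {s : ℝ}
    (hs : s ≤ C * supportFun ((· - z) '' L) (x - y)) :
    modConv (polarSet L) s / ((1 - C) * r + 1) ≤
      1 - supportFun ((· - z) '' L) ((2 : ℝ)⁻¹ • (x + y)) := by
  have hL' : L.Nonempty := ⟨0, h0L⟩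
  have hαC := mul_one_add_inner_le_one hL hL' hC1 hz hx
  have hβC := mul_one_add_inner_le_one hL hL' hC1 hz hy
  have hαr := one_le_mul_one_add_inner hL hL' hr hLr hC1 hz hx
  have hβr := one_le_mul_one_add_inner hL hL' hr hLr hC1 hz hy
  set α := 1 + ⟪x, z⟫
  set β := 1 + ⟪y, z⟫
  have hlam : 0 < (1 - C) * r + 1 := by nlinarith
  have hβ : 0 < β := by nlinarith
  have hβα : β ≤ α := by simp only [α, β]; linarith
  set p := α⁻¹ • x
  set q := β⁻¹ • y
  have hp : p ∈ polarSet L := inv_smul_mem_polarSet hx (hβ.trans_le hβα)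
  have hq : q ∈ polarSet L := inv_smul_mem_polarSet hy hβ
  have hxp : x = α • p := by simp [p, smul_smul, mul_inv_cancel₀ (hβ.trans_le hβα).ne']
  have hyq : y = β • q := by simp [q, smul_smul, mul_inv_cancel₀ hβ.ne']
  have hdiff : supportFun ((· - z) '' L) (x - y) ≤ β * supportFun L (p - q) := by
    have := supportFun_smul_sub_smul_le hL hL'
      ((polarSet_eq_setOf_supportFun_le hL hL').subset hp) q hβ.le hβα
    rw [← hxp, ← hyq] at this
    rw [supportFun_image_sub hL hL', inner_sub_left]
    linarith
  have hs' : s ≤ 2 * β / (α + β) * supportFun L (p - q) := by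
    have hαβ : 0 < α + β := by linarith
    rw [div_mul_eq_mul_div, le_div_iff₀ hαβ]
    nlinarith [mul_le_mul_of_nonneg_right hs hαβ.le, mul_le_mul_of_nonneg_right
      (show C * (α + β) ≤ 2 by linarith) (supportFun_image_sub_nonneg hL h0L hC0.le hC1 hz (x - y))]
  have hrescale := mul_modConv_polarSet_le hL hL' (supportFun_nonneg hL h0L) hp hq hβ hβα hs'
  rw [← hxp, ← hyq] at hrescale
  have hmid : supportFun ((· - z) '' L) ((2 : ℝ)⁻¹ • (x + y)) =
      supportFun L ((2 : ℝ)⁻¹ • (x + y)) - ((α + β) / 2 - 1) := by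
    rw [supportFun_image_sub hL hL', real_inner_smul_left, inner_add_left]
    ring
  have hδ := modConv_nonneg (convex_polarSet L) s
  rw [div_le_iff₀ hlam, hmid]
  nlinarith [mul_le_mul_of_nonneg_left hrescale hlam.le]

theorem gauge_polarSet_image_sub (hL : IsCompact L) (h0L : 0 ∈ L) (hC0 : 0 ≤ C)
    (hC1 : C ≤ 1) (hz : z ∈ (1 - C) • L) (u : EuclideanSpace ℝ (Fin n)) :
    gauge (polarSet ((· - z) '' L)) u = supportFun ((· - z) '' L) u :=
  gauge_polarSet (hL.image (continuous_sub_right z)) (Set.Nonempty.image _ ⟨0, h0L⟩)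
    (supportFun_image_sub_nonneg hL h0L hC0 hC1 hz) u

theorem modConvSet_polarSet_image_sub_nonempty (hL : IsCompact L) (h0L : 0 ∈ L) (hC0 : 0 < C)
    (hC1 : C ≤ 1) (hz : z ∈ (1 - C) • L) {s t : ℝ} (ht1 : t ≤ 1) (hst : s ≤ 0 → t ≤ 0)
    (hS : (modConvSet (polarSet L) s).Nonempty) :
    (modConvSet (polarSet ((· - z) '' L)) t).Nonempty := by
  have hL' : L.Nonempty := ⟨0, h0L⟩
  have hgauge := gauge_polarSet_image_sub hL h0L hC0.le hC1 hz
  by_cases ht : t ≤ 0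
  · exact modConvSet_nonempty_of_mem (zero_mem_polarSet _) (zero_mem_polarSet _)
      (by rwa [gauge_zero])
  obtain ⟨_, p, -, q, -, hpq, -⟩ := hS
  rw [gauge_polarSet hL hL' (supportFun_nonneg hL h0L)] at hpq
  have hu : 0 < supportFun ((· - z) '' L) (p - q) :=
    (mul_pos hC0 ((not_le.1 (mt hst ht)).trans_le hpq)).trans_le
      (mul_supportFun_le_supportFun_image_sub hL hL' hC1 hz _)
  have hx : supportFun ((· - z) '' L) ((supportFun ((· - z) '' L) (p - q))⁻¹ • (p - q)) = 1 := by
    rw [supportFun_smul (inv_nonneg.2 hu.le), inv_mul_cancel₀ hu.ne']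
  refine modConvSet_nonempty_of_mem ?_ (zero_mem_polarSet _) (by rw [hgauge, hx]; exact ht1)
  rw [polarSet_eq_setOf_supportFun_le (hL.image (continuous_sub_right z)) (hL'.image _)]
  exact hx.le

theorem modConv_polarSet_div_le_of_mem (hL : IsCompact L) (h0L : 0 ∈ L) (hr : 1 ≤ r)
    (hLr : L ⊆ (-r) • L) (hC0 : 0 < C) (hC1 : C ≤ 1) (hz : z ∈ (1 - C) • L) {t a : ℝ}
    (ha : a ∈ modConvSet (polarSet ((· - z) '' L)) t) :
    modConv (polarSet L) (C ^ 2 * t / (1 - C + r)) / ((1 - C) * r + 1) ≤ a := by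
  obtain ⟨x, hx, y, hy, ht, rfl⟩ := ha
  rw [gauge_polarSet_image_sub hL h0L hC0.le hC1 hz] at ht ⊢
  have hs : ∀ v, C * supportFun ((· - z) '' L) (x - y) ≤
      (1 - C + r) * supportFun ((· - z) '' L) v →
      C ^ 2 * t / (1 - C + r) ≤ C * supportFun ((· - z) '' L) v := fun v hv => by
    rw [div_le_iff₀ (by linarith)]
    nlinarith [mul_le_mul_of_nonneg_left ht hC0.le]
  rcases le_total ⟪y, z⟫ ⟪x, z⟫ with hyx | hxy
  · refine modConv_polarSet_div_le_of_inner_le hL h0L (by linarith) hLr hC0 hC1 hz hx hy hyx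
      (hs _ ?_)
    nlinarith [supportFun_image_sub_nonneg hL h0L hC0.le hC1 hz (x - y)]
  · rw [add_comm x y]
    refine modConv_polarSet_div_le_of_inner_le hL h0L (by linarith) hLr hC0 hC1 hz hy hx hxy
      (hs _ ?_)
    simpa using
      mul_supportFun_image_sub_le_neg hL ⟨0, h0L⟩ (by linarith) hLr hC0.le hC1 hz (x - y)

end Translate

theorem modConv_polar_translate_ge_general {n : ℕ} (L : Set (EuclideanSpace ℝ (Fin n)))
    (hLcomp : IsCompact L) (h0 : 0 ∈ interior L)
    (r : ℝ) (hr : 1 ≤ r) (hLr : L ⊆ (-r) • L)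
    (C : ℝ) (hC0 : 0 < C) (hC1 : C ≤ 1)
    (z : EuclideanSpace ℝ (Fin n)) (hz : z ∈ (1 - C) • L)
    (t : ℝ) (ht1 : t ≤ 1) :
    modConv (polarSet ((fun w => w - z) '' L)) t ≥
      modConv (polarSet L) (C ^ 2 * t / (1 - C + r)) / ((1 - C) * r + 1) := by
  have h0L : 0 ∈ L := interior_subset h0
  rw [ge_iff_le, modConv_eq_sInf _ t]
  rcases (modConvSet (polarSet ((fun w => w - z) '' L)) t).eq_empty_or_nonempty with hS' | hS'
  -- `sInf ∅ = 0`: with no pair for `(L - z)°` there is none for `L°` either.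
  · have hst : C ^ 2 * t / (1 - C + r) ≤ 0 → t ≤ 0 := fun hs => by
      by_contra! ht
      exact hs.not_gt (div_pos (by positivity) (by linarith))
    have hS : modConvSet (polarSet L) (C ^ 2 * t / (1 - C + r)) = ∅ :=
      Set.not_nonempty_iff_eq_empty.1 fun hS => by
        simpa [hS'] using modConvSet_polarSet_image_sub_nonempty hLcomp h0L hC0 hC1 hz ht1 hst hS
    rw [hS', modConv_eq_sInf, hS, Real.sInf_empty, zero_div]
  · exact le_csInf hS' fun _ => modConv_polarSet_div_le_of_mem hLcomp h0L hr hLr hC0 hC1 hz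

theorem modConv_polar_translate_ge {n : ℕ} (L : Set (EuclideanSpace ℝ (Fin n)))
    (hLcomp : IsCompact L) (hLconv : Convex ℝ L) (h0 : 0 ∈ interior L)
    (r : ℝ) (hr : 1 ≤ r) (hLr : L ⊆ (-r) • L)
    (C : ℝ) (hC0 : 0 < C) (hC1 : C ≤ 1)
    (z : EuclideanSpace ℝ (Fin n)) (hz : z ∈ (1 - C) • L)
    (t : ℝ) (ht0 : 0 ≤ t) (ht1 : t ≤ 1) :
    modConv (polarSet ((fun w => w - z) '' L)) t ≥
      modConv (polarSet L) (C ^ 2 * t / (1 - C + r)) / ((1 - C) * r + 1) :=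
  modConv_polar_translate_ge_general L hLcomp h0 r hr hLr C hC0 hC1 z hz t ht1
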